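/- arXiv:1905.10045 — 8 statements merged into one kernel-verified Lean document; each statement's English description precedes it below -/
import Mathlib

section
/- For any u ∈ ℝ^n, the 0-1 loss J(u), the curriculum loss Q(u), and the surrogate loss Ĵ(u) satisfy the chain of inequalities J(u) ≤ Q(u) ≤ Ĵ(u). -/
/-- The chain of inequalities `J(u) ≤ Q(u) ≤ Ĵ(u)`. -/
theorem curriculum_loss_sandwich (n : ℕ) (l : ℝ → ℝ) (u : Fin n → ℝ)
    (hl : ∀ x : ℝ, (if x < 0 then (1 : ℝ) else 0) ≤ l x) :
    (∑ i, if u i < 0 then (1 : ℝ) else 0) ≤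
      Finset.univ.inf' Finset.univ_nonempty
        (fun v : Fin n → Bool =>
          max (∑ i, if v i then l (u i) else 0)
              ((n : ℝ) - (∑ i, if v i then (1 : ℝ) else 0) +
                ∑ i, if u i < 0 then (1 : ℝ) else 0)) ∧
    Finset.univ.inf' Finset.univ_nonempty
        (fun v : Fin n → Bool =>
          max (∑ i, if v i then l (u i) else 0)
              ((n : ℝ) - (∑ i, if v i then (1 : ℝ) else 0) +
                ∑ i, if u i < 0 then (1 : ℝ) else 0)) ≤
      ∑ i, l (u i) := by
  constructor
  · apply Finset.le_inf'
    intro v _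
    refine le_trans ?_ (le_max_right _ _)
    have h1 : (∑ i, if v i then (1 : ℝ) else 0) ≤ (n : ℝ) := by
      calc (∑ i, if v i then (1 : ℝ) else 0) ≤ ∑ _i : Fin n, (1 : ℝ) :=
            Finset.sum_le_sum (fun i _ => by split <;> norm_num)
        _ = n := by simp
    linarith
  · refine le_trans (Finset.inf'_le _ (Finset.mem_univ (fun _ => true))) ?_
    simp only [if_pos]
    have hJ : (∑ i, if u i < 0 then (1 : ℝ) else 0) ≤ ∑ i, l (u i) :=
      Finset.sum_le_sum (fun i _ => hl (u i))
    have : (∑ _i : Fin n, (1 : ℝ)) = n := by simp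
    apply max_le le_rfl
    rw [this]
    linarith
end

section
/- The batch curriculum loss satisfies Q(u) ≤ Q̂(u) ≤ Ĵ(u), where Q̂(u) is the sum over batches j = 1,…,b of min over v_{·j} ∈ {0,1}^m of max(∑_{i=1}^m v_{ij}·l(u_{ij}), m − ∑_{i=1}^m v_{ij} + ∑_{i=1}^m 1(u_{ij} < 0)), and Q is the curriculum loss over all n = mb samples. -/
/-- The batch curriculum loss satisfies `Q(u) ≤ Q̂(u) ≤ Ĵ(u)`,
where the `n = m·b` samples are indexed by `(i, j) ∈ Fin m × Fin b`. -/
theorem batch_curriculum_loss (m b : ℕ) (hm : 0 < m) (hb : 0 < b)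
    (l : ℝ → ℝ) (u : Fin m → Fin b → ℝ)
    (hl : ∀ x : ℝ, (if x < 0 then (1 : ℝ) else 0) ≤ l x) :
    Finset.univ.inf' Finset.univ_nonempty
        (fun v : Fin m → Fin b → Bool =>
          max (∑ j, ∑ i, if v i j then l (u i j) else 0)
              (((m * b : ℕ) : ℝ) - (∑ j, ∑ i, if v i j then (1 : ℝ) else 0) +
                ∑ j, ∑ i, if u i j < 0 then (1 : ℝ) else 0)) ≤
      (∑ j, Finset.univ.inf' Finset.univ_nonempty
        (fun v : Fin m → Bool =>
          max (∑ i, if v i then l (u i j) else 0)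
              ((m : ℝ) - (∑ i, if v i then (1 : ℝ) else 0) +
                ∑ i, if u i j < 0 then (1 : ℝ) else 0))) ∧
    (∑ j, Finset.univ.inf' Finset.univ_nonempty
        (fun v : Fin m → Bool =>
          max (∑ i, if v i then l (u i j) else 0)
              ((m : ℝ) - (∑ i, if v i then (1 : ℝ) else 0) +
                ∑ i, if u i j < 0 then (1 : ℝ) else 0))) ≤
      ∑ j, ∑ i, l (u i j) := by
  constructor
  · choose w hw1 hw2 using fun j : Fin b =>
      Finset.exists_mem_eq_inf' (Finset.univ_nonempty (α := Fin m → Bool))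
        (fun v : Fin m → Bool =>
          max (∑ i, if v i then l (u i j) else 0)
              ((m : ℝ) - (∑ i, if v i then (1 : ℝ) else 0) +
                ∑ i, if u i j < 0 then (1 : ℝ) else 0))
    refine le_trans
      (Finset.inf'_le _ (Finset.mem_univ (fun i j => w j i))) ?_
    have hrw : (∑ j, Finset.univ.inf' Finset.univ_nonempty
        (fun v : Fin m → Bool =>
          max (∑ i, if v i then l (u i j) else 0)
              ((m : ℝ) - (∑ i, if v i then (1 : ℝ) else 0) +
                ∑ i, if u i j < 0 then (1 : ℝ) else 0)))
        = ∑ j, max (∑ i, if w j i then l (u i j) else 0)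
              ((m : ℝ) - (∑ i, if w j i then (1 : ℝ) else 0) +
                ∑ i, if u i j < 0 then (1 : ℝ) else 0) :=
      Finset.sum_congr rfl fun j _ => hw2 j
    rw [hrw]
    apply max_le
    · exact Finset.sum_le_sum fun j _ => le_max_left _ _
    · have h2 : (((m * b : ℕ) : ℝ) - (∑ j, ∑ i, if w j i then (1 : ℝ) else 0) +
          ∑ j, ∑ i, if u i j < 0 then (1 : ℝ) else 0)
          = ∑ j, ((m : ℝ) - (∑ i, if w j i then (1 : ℝ) else 0) +
            ∑ i, if u i j < 0 then (1 : ℝ) else 0) := by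
        rw [Finset.sum_add_distrib, Finset.sum_sub_distrib, Finset.sum_const,
          Finset.card_univ, Fintype.card_fin]
        push_cast
        ring
      rw [h2]
      exact Finset.sum_le_sum fun j _ => le_max_right _ _
  · refine Finset.sum_le_sum fun j _ => ?_
    refine le_trans (Finset.inf'_le _ (Finset.mem_univ (fun _ : Fin m => true))) ?_
    simp only [if_true, Finset.sum_const, Finset.card_univ, Fintype.card_fin,
      nsmul_eq_mul, mul_one, sub_self, zero_add]
    exact max_le le_rfl (Finset.sum_le_sum fun i _ => hl (u i j))
end

section
/- The scaled curriculum loss E(u) = min over v ∈ {0,1}^n of max(∑_{i=1}^n v_i·l(u_i), n − ∑_{i=1}^n v_i) satisfies J(u) ≤ 2·E(u), where J(u) = ∑_{i=1}^n 1(u_i < 0). -/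
/-- The scaled curriculum loss
`E(u) = min_{v ∈ {0,1}^n} max(∑ v_i l(u_i), n − ∑ v_i)` satisfies `J(u) ≤ 2·E(u)`. -/
theorem scaled_curriculum_loss_lower_bound (n : ℕ) (l : ℝ → ℝ) (u : Fin n → ℝ)
    (hl : ∀ x : ℝ, (if x < 0 then (1 : ℝ) else 0) ≤ l x) :
    (∑ i, if u i < 0 then (1 : ℝ) else 0) ≤
      2 * Finset.univ.inf' Finset.univ_nonempty
        (fun v : Fin n → Bool =>
          max (∑ i, if v i then l (u i) else 0)
              ((n : ℝ) - ∑ i, if v i then (1 : ℝ) else 0)) := by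
  obtain ⟨v, -, hv⟩ := Finset.exists_mem_eq_inf' Finset.univ_nonempty
    (fun v : Fin n → Bool =>
      max (∑ i, if v i then l (u i) else 0)
          ((n : ℝ) - ∑ i, if v i then (1 : ℝ) else 0))
  rw [hv]
  set A := ∑ i, if v i then l (u i) else 0 with hA
  set B := (n : ℝ) - ∑ i, if v i then (1 : ℝ) else 0 with hB
  have key : (∑ i, if u i < 0 then (1 : ℝ) else 0) ≤ A + B := by
    have h1 : (∑ i, if u i < 0 then (1 : ℝ) else 0) =
        (∑ i, if v i then (if u i < 0 then (1 : ℝ) else 0) else 0) +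
        (∑ i, if v i then 0 else (if u i < 0 then (1 : ℝ) else 0)) := by
      rw [← Finset.sum_add_distrib]
      apply Finset.sum_congr rfl
      intro i _
      by_cases h : v i <;> simp [h]
    rw [h1]
    have hBeq : B = ∑ i, if v i then (0:ℝ) else 1 := by
      have hn : (n:ℝ) = ∑ _i : Fin n, (1:ℝ) := by simp
      rw [hB, hn, ← Finset.sum_sub_distrib]
      exact Finset.sum_congr rfl fun i _ => by by_cases h : v i <;> simp [h]
    rw [hBeq]
    refine add_le_add (Finset.sum_le_sum fun i _ => ?_) (Finset.sum_le_sum fun i _ => ?_)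
    · by_cases h : v i
      · simpa [h] using hl (u i)
      · simp [h]
    · by_cases h : v i
      · simp [h]
      · simp only [h]
        split_ifs <;> norm_num
  calc (∑ i, if u i < 0 then (1 : ℝ) else 0) ≤ A + B := key
    _ ≤ max A B + max A B := add_le_add (le_max_left _ _) (le_max_right _ _)
    _ = 2 * max A B := by ring
end

section
/- The batch scaled curriculum loss satisfies E(u) ≤ Ê(u) ≤ Ĵ(u), where Ê(u) = ∑_{j=1}^b min_{v_{·j} ∈ {0,1}^m} max(∑_{i=1}^m v_{ij}·l(u_{ij}), m − ∑_{i=1}^m v_{ij}), E is the scaled curriculum loss over all n = mb samples, and Ĵ(u) = ∑_{i,j} l(u_{ij}). -/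
/-- The batch scaled curriculum loss satisfies `E(u) ≤ Ê(u) ≤ Ĵ(u)`. -/
theorem batch_scaled_curriculum_loss (m b : ℕ) (hm : 0 < m) (hb : 0 < b)
    (l : ℝ → ℝ) (u : Fin m → Fin b → ℝ)
    (hl : ∀ x : ℝ, (if x < 0 then (1 : ℝ) else 0) ≤ l x) :
    Finset.univ.inf' Finset.univ_nonempty
        (fun v : Fin m → Fin b → Bool =>
          max (∑ j, ∑ i, if v i j then l (u i j) else 0)
              (((m * b : ℕ) : ℝ) - ∑ j, ∑ i, if v i j then (1 : ℝ) else 0)) ≤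
      (∑ j, Finset.univ.inf' Finset.univ_nonempty
        (fun v : Fin m → Bool =>
          max (∑ i, if v i then l (u i j) else 0)
              ((m : ℝ) - ∑ i, if v i then (1 : ℝ) else 0))) ∧
    (∑ j, Finset.univ.inf' Finset.univ_nonempty
        (fun v : Fin m → Bool =>
          max (∑ i, if v i then l (u i j) else 0)
              ((m : ℝ) - ∑ i, if v i then (1 : ℝ) else 0))) ≤
      ∑ j, ∑ i, l (u i j) := by
  have hl0 : ∀ x : ℝ, 0 ≤ l x := by
    intro x
    refine le_trans ?_ (hl x)
    split <;> norm_num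
  constructor
  · -- choose per-column minimizers
    have hch : ∀ j : Fin b, ∃ w : Fin m → Bool,
        Finset.univ.inf' Finset.univ_nonempty
          (fun v : Fin m → Bool =>
            max (∑ i, if v i then l (u i j) else 0)
                ((m : ℝ) - ∑ i, if v i then (1 : ℝ) else 0)) =
          max (∑ i, if w i then l (u i j) else 0)
              ((m : ℝ) - ∑ i, if w i then (1 : ℝ) else 0) := by
      intro j
      obtain ⟨w, -, hw⟩ := Finset.exists_mem_eq_inf' (Finset.univ_nonempty)
        (fun v : Fin m → Bool =>
          max (∑ i, if v i then l (u i j) else 0)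
              ((m : ℝ) - ∑ i, if v i then (1 : ℝ) else 0))
      exact ⟨w, hw⟩
    choose w hw using hch
    have h1 : Finset.univ.inf' Finset.univ_nonempty
        (fun v : Fin m → Fin b → Bool =>
          max (∑ j, ∑ i, if v i j then l (u i j) else 0)
              (((m * b : ℕ) : ℝ) - ∑ j, ∑ i, if v i j then (1 : ℝ) else 0)) ≤
        max (∑ j, ∑ i, if w j i then l (u i j) else 0)
            (((m * b : ℕ) : ℝ) - ∑ j, ∑ i, if w j i then (1 : ℝ) else 0) :=
      Finset.inf'_le _ (Finset.mem_univ (fun i j => w j i))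
    have h2 : max (∑ j, ∑ i, if w j i then l (u i j) else 0)
            (((m * b : ℕ) : ℝ) - ∑ j, ∑ i, if w j i then (1 : ℝ) else 0) ≤
        ∑ j, max (∑ i, if w j i then l (u i j) else 0)
            ((m : ℝ) - ∑ i, if w j i then (1 : ℝ) else 0) := by
      apply max_le
      · exact Finset.sum_le_sum fun j _ => le_max_left _ _
      · have h3 : (((m * b : ℕ) : ℝ) - ∑ j, ∑ i, if w j i then (1 : ℝ) else 0)
            = ∑ j : Fin b, ((m : ℝ) - ∑ i, if w j i then (1 : ℝ) else 0) := by
          rw [Finset.sum_sub_distrib]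
          push_cast
          simp only [Finset.sum_const, Finset.card_univ, Fintype.card_fin, nsmul_eq_mul]
          ring
        rw [h3]
        exact Finset.sum_le_sum fun j _ => le_max_right _ _
    refine le_trans (le_trans h1 h2) (le_of_eq ?_)
    exact Finset.sum_congr rfl fun j _ => (hw j).symm
  · apply Finset.sum_le_sum
    intro j _
    refine le_trans (Finset.inf'_le _ (Finset.mem_univ (fun _ => true))) ?_
    simp only [if_true]
    apply max_le
    · exact le_of_eq rfl
    · have : (∑ _i : Fin m, (1 : ℝ)) = (m : ℝ) := by simp
      rw [this, sub_self]
      exact Finset.sum_nonneg fun i _ => hl0 _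
end

section
/- Suppose the losses are sorted so that l_1 ≤ l_2 ≤ ⋯ ≤ l_n with each l_i ≥ 0, and let C ∈ ℝ. Define T* as the largest index T ∈ {0,1,…,n} such that L_T ≤ C + 1 − T, where L_T = ∑_{i=1}^T l_i (with L_0 = 0), assuming L_0 = 0 ≤ C + 1 so T* is well-defined. Then the greedy solution v* with v*_i = 1 for i ≤ T* and v*_i = 0 for i > T* achieves the minimum of max(∑_{i=1}^n v_i·l_i, C − ∑_{i=1}^n v_i) over all v ∈ {0,1}^n. -/
private lemma strictMono_fin_le {k n : ℕ} (e : Fin k → Fin n) (he : StrictMono e)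
    (j : Fin k) : (j : ℕ) ≤ (e j : ℕ) := by
  obtain ⟨m, hm⟩ := j
  induction m with
  | zero => simp
  | succ m ih =>
    have h' : m < k := by omega
    have h1 : m ≤ ((e ⟨m, h'⟩ : Fin n) : ℕ) := by simpa using ih h'
    have h2 : (⟨m, h'⟩ : Fin k) < ⟨m + 1, hm⟩ := by simp [Fin.lt_def]
    have h3 : ((e ⟨m, h'⟩ : Fin n) : ℕ) < ((e ⟨m + 1, hm⟩ : Fin n) : ℕ) :=
      Fin.lt_def.mp (he h2)
    simpa using Nat.lt_of_le_of_lt h1 h3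

private lemma prefix_le_sum {n : ℕ} (l : Fin n → ℝ)
    (hsorted : ∀ i j : Fin n, i ≤ j → l i ≤ l j)
    (S : Finset (Fin n)) :
    (∑ i : Fin n, if (i : ℕ) < S.card then l i else 0) ≤ ∑ i ∈ S, l i := by
  set k := S.card with hk
  have hkn' : k ≤ n := by
    rw [hk]; simpa using Finset.card_le_card (Finset.subset_univ S)
  set g : ℕ → ℝ := fun m => if h : m < n then l ⟨m, h⟩ else 0 with hg
  -- rewrite RHS
  have hRHS : ∑ i ∈ S, l i = ∑ j : Fin k, l (S.orderEmbOfFin hk.symm j) := by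
    rw [← Finset.sum_coe_sort S l]
    exact (Fintype.sum_equiv (S.orderIsoOfFin hk.symm).toEquiv
      (fun j => l (S.orderEmbOfFin hk.symm j)) (fun x => l ↑x)
      (fun j => by simp [Finset.coe_orderIsoOfFin_apply])).symm
  -- rewrite LHS
  have hLHS : (∑ i : Fin n, if (i : ℕ) < k then l i else 0)
      = ∑ j : Fin k, l (Fin.castLE hkn' j) := by
    have e1 : (∑ i : Fin n, if (i : ℕ) < k then l i else 0)
        = ∑ m ∈ Finset.range n, (if m < k then g m else 0) := by
      rw [← Fin.sum_univ_eq_sum_range (fun m => if m < k then g m else 0) n]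
      apply Finset.sum_congr rfl
      intro i _
      by_cases h : (i : ℕ) < k
      · simp [h, hg, i.2]
      · simp [h]
    have e2 : (∑ m ∈ Finset.range n, (if m < k then g m else 0))
        = ∑ m ∈ Finset.range k, g m := by
      rw [← Finset.sum_filter]
      congr 1
      ext m
      simp only [Finset.mem_filter, Finset.mem_range]
      omega
    have e3 : (∑ m ∈ Finset.range k, g m) = ∑ j : Fin k, l (Fin.castLE hkn' j) := by
      rw [← Fin.sum_univ_eq_sum_range g k]
      apply Finset.sum_congr rfl
      intro j _
      simp [hg, Nat.lt_of_lt_of_le j.2 hkn', Fin.castLE]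
    rw [e1, e2, e3]
  rw [hRHS, hLHS]
  apply Finset.sum_le_sum
  intro j _
  apply hsorted
  have := strictMono_fin_le _ (S.orderEmbOfFin hk.symm).strictMono j
  exact Fin.le_def.mpr (by simpa using this)

private lemma prefix_mono {n : ℕ} (l : Fin n → ℝ) (hnonneg : ∀ i, 0 ≤ l i)
    {a b : ℕ} (hab : a ≤ b) :
    (∑ i : Fin n, if (i : ℕ) < a then l i else 0)
      ≤ ∑ i : Fin n, if (i : ℕ) < b then l i else 0 := by
  apply Finset.sum_le_sum
  intro i _
  by_cases h : (i : ℕ) < a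
  · rw [if_pos h, if_pos (by omega : (i : ℕ) < b)]
  · rw [if_neg h]
    split
    · exact hnonneg i
    · exact le_rfl

/-- For sorted nonnegative losses `l_1 ≤ ⋯ ≤ l_n`, `0 ≤ C ≤ 2n`, and
`T*` the largest `T ∈ {0,…,n}` with `L_T ≤ C + 1 − T` (where `L_T = ∑_{i=1}^T l_i`),
the greedy prefix vector `v*` (with `v*_i = 1` iff `i ≤ T*`) minimizes
`max(∑ v_i l_i, C − ∑ v_i)` over `v ∈ {0,1}^n`. -/
theorem greedy_partial_optimization (n : ℕ) (l : Fin n → ℝ) (C : ℝ)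
    (hsorted : ∀ i j : Fin n, i ≤ j → l i ≤ l j)
    (hnonneg : ∀ i, 0 ≤ l i)
    (hC : 0 ≤ C) (hC2 : C ≤ 2 * n)
    (Tstar : ℕ) (hTn : Tstar ≤ n)
    (hfeas : (∑ i : Fin n, if (i : ℕ) < Tstar then l i else 0) ≤ C + 1 - Tstar)
    (hmax : ∀ T : ℕ, T ≤ n →
      (∑ i : Fin n, if (i : ℕ) < T then l i else 0) ≤ C + 1 - T → T ≤ Tstar) :
    ∀ v : Fin n → Bool,
      max (∑ i : Fin n, if (i : ℕ) < Tstar then l i else 0) (C - Tstar) ≤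
        max (∑ i, if v i then l i else 0) (C - ∑ i, if v i then (1 : ℝ) else 0) := by
  intro v
  set S : Finset (Fin n) := Finset.univ.filter (fun i => v i = true) with hS
  set k := S.card with hk
  have hkn : k ≤ n := by
    rw [hk]; simpa using Finset.card_le_card (Finset.subset_univ S)
  have hsum1 : (∑ i, if v i then l i else 0) = ∑ i ∈ S, l i := by
    rw [hS, Finset.sum_filter]
  have hsum2 : (∑ i, if v i then (1 : ℝ) else 0) = (k : ℝ) := by
    rw [hk, hS, Finset.sum_boole]
  rw [hsum1, hsum2]
  have key : (∑ i : Fin n, if (i : ℕ) < k then l i else 0) ≤ ∑ i ∈ S, l i := by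
    rw [hk]; exact prefix_le_sum l hsorted S
  have hmid : max (∑ i : Fin n, if (i : ℕ) < Tstar then l i else 0) (C - Tstar)
      ≤ max (∑ i : Fin n, if (i : ℕ) < k then l i else 0) (C - k) := by
    rcases lt_trichotomy k Tstar with h | h | h
    · apply max_le
      · refine le_trans hfeas (le_trans ?_ (le_max_right _ _))
        have : (k : ℝ) + 1 ≤ (Tstar : ℝ) := by exact_mod_cast h
        linarith
      · refine le_trans ?_ (le_max_right _ _)
        have : (k : ℝ) ≤ (Tstar : ℝ) := by exact_mod_cast h.le
        linarith
    · rw [h]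
    · apply max_le
      · exact le_trans (prefix_mono l hnonneg h.le) (le_max_left _ _)
      · have hT1 : Tstar + 1 ≤ n := by omega
        have hnot : C + 1 - ((Tstar : ℝ) + 1)
            < ∑ i : Fin n, if (i : ℕ) < Tstar + 1 then l i else 0 := by
          by_contra hcon
          push_neg at hcon
          have : Tstar + 1 ≤ Tstar := by
            apply hmax (Tstar + 1) hT1
            push_cast
            linarith
          omega
        have h2 : (∑ i : Fin n, if (i : ℕ) < Tstar + 1 then l i else 0)
            ≤ ∑ i : Fin n, if (i : ℕ) < k then l i else 0 :=
          prefix_mono l hnonneg (by omega)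
        refine le_trans ?_ (le_max_left _ _)
        linarith
  refine le_trans hmid (max_le ?_ ?_)
  · exact le_trans key (le_max_left _ _)
  · exact le_max_right _ _
end

section
/- Let l_1 ≤ l_2 ≤ ⋯ ≤ l_n be nonnegative reals and C ∈ ℝ. Let T* ∈ {0,…,n} satisfy L_{T*} ≤ C + 1 − T* and (if T* < n) L_{T*+1} > C − T*, where L_T = ∑_{i=1}^T l_i. Then the minimum over v ∈ {0,1}^n of max(∑_{i=1}^n v_i·l_i, C − ∑_{i=1}^n v_i) equals max(L_{T*}, C − T*). -/
/-!
Only the number `k` of selected items matters for the second term, and among selections of size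
`k` the first `k` (the smallest) items minimize the first, so the objective is bounded below by
`max (L k) (C - k)` with `L = prefixSum l`, with equality for the first `k` items. As `k` grows
`L k` increases and `C - k` decreases; the two conditions on `T*` say that `T*` is the crossing
point, where this maximum is smallest.
-/

open Finset

section PrefixSum

variable {n : ℕ} {M : Type*} [AddCommMonoid M]

def prefixSum (l : Fin n → M) (T : ℕ) : M :=
  ∑ i : Fin n, if (i : ℕ) < T then l i else 0

@[simp]
lemma prefixSum_zero (l : Fin n → M) : prefixSum l 0 = 0 := by
  simp [prefixSum]

lemma prefixSum_succ (l : Fin n → M) {k : ℕ} (hk : k < n) :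
    prefixSum l (k + 1) = prefixSum l k + l ⟨k, hk⟩ := by
  have hsplit : ∀ i : Fin n, (if (i : ℕ) < k + 1 then l i else 0)
      = (if (i : ℕ) < k then l i else 0) + if i = ⟨k, hk⟩ then l i else 0 := by
    intro i
    simp only [Fin.ext_iff]
    split_ifs <;> simp_all <;> omega
  simp only [prefixSum, hsplit, sum_add_distrib, sum_ite_eq', mem_univ, if_true]

lemma prefixSum_one_eq_self {R : Type*} [AddCommMonoidWithOne R] {T : ℕ} (hT : T ≤ n) :
    prefixSum (fun _ : Fin n => (1 : R)) T = T := by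
  simp [prefixSum, sum_boole, Fin.card_filter_val_lt, hT]

variable [PartialOrder M] [IsOrderedAddMonoid M]

lemma prefixSum_mono {l : Fin n → M} (hl : ∀ i, 0 ≤ l i) : Monotone (prefixSum l) := by
  intro T T' hTT'
  refine sum_le_sum fun i _ => ?_
  split_ifs <;> first | exact le_rfl | exact hl i | omega

lemma prefixSum_card_le_sum {l : Fin n → M} (hl : Monotone l) (S : Finset (Fin n)) :
    prefixSum l #S ≤ ∑ i ∈ S, l i := by
  classical
  induction S using Finset.induction_on_max with
  | empty => simp
  | insert a s hlt ih =>
    have ha : a ∉ s := fun h => lt_irrefl a (hlt a h)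
    have hcard : #s ≤ a := by
      simpa using card_le_card fun x hx => mem_Iio.mpr (hlt x hx)
    rw [card_insert_of_notMem ha, sum_insert ha, add_comm (l a),
      prefixSum_succ l (hcard.trans_lt a.isLt)]
    exact add_le_add ih (hl (Fin.mk_le_of_le_val hcard))

end PrefixSum

lemma isMinOn_max_sub_of_crossing {L : ℕ → ℝ} (hL : Monotone L) {C : ℝ} {n T : ℕ}
    (hfeas : L T ≤ C + 1 - T) (hnext : T < n → C - T < L (T + 1)) :
    IsMinOn (fun k : ℕ => max (L k) (C - k)) (Set.Iic n) T := by
  refine isMinOn_iff.mpr fun k hk => ?_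
  rw [Set.mem_Iic] at hk
  rcases lt_or_ge T k with hTk | hkT
  · have hLk : C - T < L k := (hnext (hTk.trans_le hk)).trans_le (hL hTk)
    exact le_max_of_le_left (max_le (hL hTk.le) hLk.le)
  rcases hkT.eq_or_lt with rfl | hkT
  · exact le_rfl
  · have hkT' : (k : ℝ) + 1 ≤ T := by exact_mod_cast hkT
    exact le_max_of_le_right (max_le (by linarith) (by linarith))

/-- For sorted nonnegative losses and `T*` with `L_{T*} ≤ C + 1 − T*` and
(if `T* < n`) `L_{T*+1} > C − T*`, the minimum over `v ∈ {0,1}^n` of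
`max(∑ v_i l_i, C − ∑ v_i)` equals `max(L_{T*}, C − T*)`. -/
theorem partial_optimization_value (n : ℕ) (l : Fin n → ℝ) (C : ℝ)
    (hsorted : ∀ i j : Fin n, i ≤ j → l i ≤ l j)
    (hnonneg : ∀ i, 0 ≤ l i)
    (Tstar : ℕ) (hTn : Tstar ≤ n)
    (hfeas : (∑ i : Fin n, if (i : ℕ) < Tstar then l i else 0) ≤ C + 1 - Tstar)
    (hnext : Tstar < n →
      C - Tstar < (∑ i : Fin n, if (i : ℕ) < Tstar + 1 then l i else 0)) :
    Finset.univ.inf' Finset.univ_nonempty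
        (fun v : Fin n → Bool =>
          max (∑ i, if v i then l i else 0) (C - ∑ i, if v i then (1 : ℝ) else 0)) =
      max (∑ i : Fin n, if (i : ℕ) < Tstar then l i else 0) (C - Tstar) := by
  have hmin := isMinOn_max_sub_of_crossing (prefixSum_mono hnonneg) hfeas hnext
  refine le_antisymm ?_ (le_inf' _ _ fun v _ => ?_)
  · refine (inf'_le _ (mem_univ fun i : Fin n => decide ((i : ℕ) < Tstar))).trans_eq ?_
    have hcount : (∑ i : Fin n, if (i : ℕ) < Tstar then (1 : ℝ) else 0) = Tstar :=
      prefixSum_one_eq_self hTn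
    simp only [decide_eq_true_eq, hcount]
  · set S : Finset (Fin n) := {i | v i}
    have hS : #S ≤ n := (card_le_univ S).trans_eq (Fintype.card_fin n)
    calc max (prefixSum l Tstar) (C - Tstar)
        ≤ max (prefixSum l #S) (C - #S) := hmin (Set.mem_Iic.mpr hS)
      _ ≤ max (∑ i ∈ S, l i) (C - #S) :=
        max_le_max_right _ (prefixSum_card_le_sum (fun i j => hsorted i j) S)
      _ = _ := by rw [sum_filter, ← sum_boole]
end

section
/- If C = (1−ε)n (an integer) and losses are sorted nondecreasingly, then min_{v∈{0,1}^n} max(∑_{i=1}^n v_i l(u_i), C − ∑_{i=1}^n v_i) = min_{v∈{0,1}^{(1−ε)n}} max(∑_{i=1}^{(1−ε)n} v_i l(u_i), (1−ε)n − ∑_{i=1}^{(1−ε)n} v_i). -/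
lemma fin_strictMono_le_apply {m n : ℕ} (f : Fin m → Fin n) (hf : StrictMono f) :
    ∀ j : Fin m, (j : ℕ) ≤ (f j : ℕ) := by
  intro j
  induction' hj : (j : ℕ) with k ih generalizing j
  · exact Nat.zero_le _
  · have hk : k < m := by omega
    have h1 := hf (show (⟨k, hk⟩ : Fin m) < j by simp [Fin.lt_def, hj])
    have h2 := ih ⟨k, hk⟩ rfl
    simp only [Fin.lt_def] at h1
    omega

/-- A sum over `Fin n` of a function vanishing on indices `≥ C` equals the sum over
`Fin C`. -/
lemma sum_extend {n C : ℕ} (hCn : C ≤ n) (g : Fin n → ℝ)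
    (hg : ∀ i : Fin n, C ≤ (i : ℕ) → g i = 0) :
    ∑ i, g i = ∑ j : Fin C, g (Fin.castLE hCn j) := by
  have h1 : ∑ i : Fin n, g i
      = ∑ i ∈ Finset.univ.filter (fun i : Fin n => (i : ℕ) < C), g i :=
    (Finset.sum_filter_of_ne (fun x _ hx => by
      by_contra h; exact hx (hg x (le_of_not_gt h)))).symm
  rw [h1]
  refine Finset.sum_bij' (fun a ha => (⟨(a : ℕ), (Finset.mem_filter.1 ha).2⟩ : Fin C))
    (fun b _ => Fin.castLE hCn b) (fun a ha => Finset.mem_univ _)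
    (fun b hb => Finset.mem_filter.2 ⟨Finset.mem_univ _, b.isLt⟩)
    (fun a ha => by apply Fin.ext; rfl) (fun b hb => by apply Fin.ext; rfl)
    (fun a ha => rfl)

/-- Sum of the `k` smallest (first) values of a sorted function is at most the sum over
any finset of cardinality at least `k`. -/
lemma sum_first_le_sum {n : ℕ} (l : Fin n → ℝ)
    (hsorted : ∀ i j : Fin n, i ≤ j → l i ≤ l j) (hnonneg : ∀ i, 0 ≤ l i)
    (S : Finset (Fin n)) (k : ℕ) (hkn : k ≤ n) (hk : k ≤ S.card) :
    ∑ j : Fin k, l (Fin.castLE hkn j) ≤ ∑ i ∈ S, l i := by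
  have hcard : S.card ≤ n := by simpa using S.card_le_univ
  set e := S.orderEmbOfFin rfl with he
  have hmem : ∀ j, e j ∈ S := fun j => S.orderEmbOfFin_mem rfl j
  have hsum : ∑ i ∈ S, l i = ∑ j : Fin S.card, l (e j) := by
    refine (Finset.sum_bij (fun j _ => e j) (fun j _ => hmem j) ?_ ?_ (fun _ _ => rfl)).symm
    · intro a _ b _ hab
      exact e.injective hab
    · intro b hb
      have : b ∈ Set.range e := by rw [Finset.range_orderEmbOfFin]; exact hb
      obtain ⟨j, hj⟩ := this
      exact ⟨j, Finset.mem_univ _, hj⟩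
  set f : ℕ → ℝ := fun m => if h : m < n then l ⟨m, h⟩ else 0 with hf
  have hfin : ∀ (p : ℕ) (hpn : p ≤ n),
      ∑ j : Fin p, l (Fin.castLE hpn j) = ∑ m ∈ Finset.range p, f m := by
    intro p hpn
    rw [← Fin.sum_univ_eq_sum_range f p]
    refine Finset.sum_congr rfl (fun j _ => ?_)
    rw [hf]
    simp only [dif_pos (lt_of_lt_of_le j.isLt hpn)]
    rfl
  have step1 : ∑ j : Fin k, l (Fin.castLE hkn j)
      ≤ ∑ j : Fin S.card, l (Fin.castLE hcard j) := by
    rw [hfin k hkn, hfin S.card hcard]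
    apply Finset.sum_le_sum_of_subset_of_nonneg (Finset.range_subset_range.2 hk)
    intro m hm _
    simp only [Finset.mem_range] at hm
    rw [hf]
    simp only [dif_pos (lt_of_lt_of_le hm hcard)]
    exact hnonneg _
  have step2 : ∑ j : Fin S.card, l (Fin.castLE hcard j) ≤ ∑ j : Fin S.card, l (e j) := by
    refine Finset.sum_le_sum (fun j _ => hsorted _ _ ?_)
    have := fin_strictMono_le_apply e e.strictMono j
    simpa [Fin.le_def] using this
  rw [hsum]
  exact le_trans step1 step2

/-- With `C = (1−ε)n` an integer and sorted nonnegative losses, the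
noise-pruned curriculum loss over all `n` samples equals the basic curriculum loss over
the `(1−ε)n` samples with smallest losses. -/
theorem npcl_reduces_to_basic_cl (n : ℕ) (l : Fin n → ℝ) (ε : ℝ)
    (hε0 : 0 ≤ ε) (hε1 : ε ≤ 1)
    (hsorted : ∀ i j : Fin n, i ≤ j → l i ≤ l j)
    (hnonneg : ∀ i, 0 ≤ l i)
    (C : ℕ) (hC : (C : ℝ) = (1 - ε) * n) (hCn : C ≤ n) :
    Finset.univ.inf' Finset.univ_nonempty
        (fun v : Fin n → Bool =>
          max (∑ i, if v i then l i else 0)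
              ((C : ℝ) - ∑ i, if v i then (1 : ℝ) else 0)) =
      Finset.univ.inf' Finset.univ_nonempty
        (fun v : Fin C → Bool =>
          max (∑ i, if v i then l (Fin.castLE hCn i) else 0)
              ((C : ℝ) - ∑ i, if v i then (1 : ℝ) else 0)) := by
  apply le_antisymm
  · -- extend each w : Fin C → Bool by false
    apply Finset.le_inf'
    intro w _
    set v : Fin n → Bool := fun i => if h : (i : ℕ) < C then w ⟨i, h⟩ else false with hv
    have hv0 : ∀ i : Fin n, C ≤ (i : ℕ) → v i = false := by
      intro i hi
      rw [hv]
      simp [dif_neg (not_lt.2 hi)]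
    have hvw : ∀ j : Fin C, v (Fin.castLE hCn j) = w j := by
      intro j
      rw [hv]
      simp only [Fin.castLE, dif_pos j.isLt]
    refine le_trans (Finset.inf'_le _ (Finset.mem_univ v)) ?_
    have h1 : ∑ i, (if v i then l i else 0)
        = ∑ i, (if w i then l (Fin.castLE hCn i) else 0) := by
      rw [sum_extend hCn _ (fun i hi => by rw [hv0 i hi]; simp)]
      exact Finset.sum_congr rfl (fun j _ => by rw [hvw j])
    have h2 : ∑ i, (if v i then (1:ℝ) else 0) = ∑ i, (if w i then (1:ℝ) else 0) := by
      rw [sum_extend hCn _ (fun i hi => by rw [hv0 i hi]; simp)]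
      exact Finset.sum_congr rfl (fun j _ => by rw [hvw j])
    rw [h1, h2]
  · -- replace each v : Fin n → Bool by the indicator of the min(card, C) smallest indices
    apply Finset.le_inf'
    intro v _
    set S : Finset (Fin n) := Finset.univ.filter (fun i => v i = true) with hS
    set k : ℕ := min S.card C with hk
    have hkS : k ≤ S.card := min_le_left _ _
    have hkC : k ≤ C := min_le_right _ _
    have hkn : k ≤ n := le_trans hkC hCn
    set w : Fin C → Bool := fun j => decide ((j : ℕ) < k) with hw
    refine le_trans (Finset.inf'_le _ (Finset.mem_univ w)) ?_
    have hw0 : ∀ j : Fin C, k ≤ (j : ℕ) → w j = false := by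
      intro j hj
      rw [hw]
      simp [not_lt.2 hj]
    have hw1 : ∀ j : Fin k, w (Fin.castLE hkC j) = true := by
      intro j
      rw [hw]
      simp [Fin.castLE]
    have hsumv : ∑ i, (if v i then l i else 0) = ∑ i ∈ S, l i := by
      rw [hS, Finset.sum_filter]
    have hcntv : ∑ i, (if v i then (1:ℝ) else 0) = (S.card : ℝ) := by
      rw [hS]
      simp [Finset.sum_boole]
    have hsumw : ∑ i, (if w i then l (Fin.castLE hCn i) else 0)
        = ∑ j : Fin k, l (Fin.castLE hkn j) := by
      rw [sum_extend hkC _ (fun i hi => by rw [hw0 i hi]; simp)]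
      refine Finset.sum_congr rfl (fun j _ => ?_)
      rw [hw1 j]
      simp only [if_true]
      congr 1
    have hcntw : ∑ i, (if w i then (1:ℝ) else 0) = (k : ℝ) := by
      rw [sum_extend hkC _ (fun i hi => by rw [hw0 i hi]; simp)]
      rw [Finset.sum_congr rfl (fun j _ => by rw [hw1 j] : ∀ j ∈ Finset.univ,
        (if w (Fin.castLE hkC j) then (1:ℝ) else 0) = if true then (1:ℝ) else 0)]
      simp
    rw [hsumv, hcntv, hsumw, hcntw]
    have hsumS : (0:ℝ) ≤ ∑ i ∈ S, l i := Finset.sum_nonneg (fun i _ => hnonneg i)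
    have hkey : ∑ j : Fin k, l (Fin.castLE hkn j) ≤ ∑ i ∈ S, l i :=
      sum_first_le_sum l hsorted hnonneg S k hkn hkS
    apply max_le
    · exact le_trans hkey (le_max_left _ _)
    · rcases le_or_gt S.card C with h | h
      · have hkc : k = S.card := by omega
        rw [hkc]
        exact le_max_right _ _
      · have hkc : k = C := by omega
        rw [hkc, sub_self]
        exact le_trans hsumS (le_max_left _ _)
end

section
/- For any l with l(u) ≥ 1(u < 0), any u ∈ ℝ^n, and any C ≥ n, the 0-1 loss satisfies ∑_{i=1}^n 1(u_i < 0) ≤ 2 · min_{v∈{0,1}^n} max(∑_{i=1}^n v_i·l(u_i), C − ∑_{i=1}^n v_i). -/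
/-- For any `C ≥ n`, the 0-1 loss satisfies
`∑ 1(u_i < 0) ≤ 2 · min_{v∈{0,1}^n} max(∑ v_i l(u_i), C − ∑ v_i)`. -/
theorem zero_one_loss_le_two_partial_optimization (n : ℕ) (l : ℝ → ℝ)
    (u : Fin n → ℝ) (C : ℝ)
    (hl : ∀ x : ℝ, (if x < 0 then (1 : ℝ) else 0) ≤ l x)
    (hC : (n : ℝ) ≤ C) :
    (∑ i, if u i < 0 then (1 : ℝ) else 0) ≤
      2 * Finset.univ.inf' Finset.univ_nonempty
        (fun v : Fin n → Bool =>
          max (∑ i, if v i then l (u i) else 0)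
              (C - ∑ i, if v i then (1 : ℝ) else 0)) := by
  obtain ⟨v, -, hv⟩ := Finset.exists_mem_eq_inf' (Finset.univ_nonempty)
    (fun v : Fin n → Bool =>
      max (∑ i, if v i then l (u i) else 0)
          (C - ∑ i, if v i then (1 : ℝ) else 0))
  rw [hv]
  have h1 : (∑ i, if u i < 0 then (1 : ℝ) else 0) ≤
      (∑ i, if v i then l (u i) else 0) + (∑ i, if v i then (0:ℝ) else 1) := by
    rw [← Finset.sum_add_distrib]
    apply Finset.sum_le_sum
    intro i _
    by_cases h : v i
    · simp only [h, if_true, add_zero]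
      exact hl (u i)
    · simp only [h, if_false, zero_add]
      split <;> norm_num
  have h2 : (∑ i, if v i then (0:ℝ) else 1) ≤ C - ∑ i, if v i then (1:ℝ) else 0 := by
    have : (∑ i, if v i then (0:ℝ) else 1) + (∑ i, if v i then (1:ℝ) else 0) = n := by
      rw [← Finset.sum_add_distrib]
      have : ∀ i : Fin n, ((if v i then (0:ℝ) else 1) + (if v i then (1:ℝ) else 0)) = 1 := by
        intro i; by_cases h : v i <;> simp [h]
      simp [this]
    linarith
  calc (∑ i, if u i < 0 then (1 : ℝ) else 0)
      ≤ (∑ i, if v i then l (u i) else 0) + (∑ i, if v i then (0:ℝ) else 1) := h1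
    _ ≤ (∑ i, if v i then l (u i) else 0) + (C - ∑ i, if v i then (1:ℝ) else 0) := by linarith
    _ ≤ 2 * max (∑ i, if v i then l (u i) else 0) (C - ∑ i, if v i then (1:ℝ) else 0) := by
        have := le_max_left (∑ i, if v i then l (u i) else 0) (C - ∑ i, if v i then (1:ℝ) else 0)
        have := le_max_right (∑ i, if v i then l (u i) else 0) (C - ∑ i, if v i then (1:ℝ) else 0)
        linarith
end
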